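/- For unitaries U, V that are diagonal in the computational basis, writing U = e^{iθ_U/2}Π₀ + e^{-iθ_U/2}Π₁ and V = e^{iθ_V/2}Π₀ + e^{-iθ_V/2}Π₁, the channel E[U⊗V] is determined by a 4×4 Hermitian matrix M whose diagonal entries are all 1, whose entries are complex exponentials of ±θ_U, ±θ_V, ±(θ_U±θ_V), and which is symmetric under transposition about the anti-diagonal; consequently the real span of {E[U⊗V] : U,V ∈ {1,Z,S,S†}} has dimension at most 9. -/
import Mathlib


open Matrix Kronecker

noncomputable def Zg : Matrix (Fin 2) (Fin 2) ℂ := !![1, 0; 0, -1]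
noncomputable def Sg : Matrix (Fin 2) (Fin 2) ℂ := !![1, 0; 0, Complex.I]

/-- The unitary-conjugation channel `ρ ↦ W ρ W†`, as a real-linear map. -/
noncomputable def chan (W : Matrix (Fin 2 × Fin 2) (Fin 2 × Fin 2) ℂ) :
    Matrix (Fin 2 × Fin 2) (Fin 2 × Fin 2) ℂ →ₗ[ℝ] Matrix (Fin 2 × Fin 2) (Fin 2 × Fin 2) ℂ where
  toFun ρ := W * ρ * Wᴴ
  map_add' a b := by simp only [Matrix.mul_add, Matrix.add_mul]
  map_smul' c a := by simp [Matrix.mul_smul, Matrix.smul_mul]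

/-- A diagonal single-qubit unitary with phases `±θ/2`. -/
noncomputable def diagU (θ : ℝ) : Fin 2 → ℂ :=
  fun i => Complex.exp (Complex.I * θ / 2 * (if i = 0 then 1 else -1))

/-- The diagonal of the Choi matrix of `E[U⊗V]` for diagonal unitaries `U`, `V`. -/
noncomputable def Mmat (θU θV : ℝ) :
    Matrix (Fin 2 × Fin 2) (Fin 2 × Fin 2) ℂ :=
  fun a b => (diagU θU a.1 * diagU θV a.2) * star (diagU θU b.1 * diagU θV b.2)

section Stmt18Aux

lemma diagU_conj (θ : ℝ) (i : Fin 2) :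
    star (diagU θ i) = Complex.exp (-(Complex.I * θ / 2 * (if i = 0 then 1 else -1))) := by
  rw [diagU, ← starRingEnd_apply, ← Complex.exp_conj]
  congr 1
  fin_cases i <;> simp [Complex.conj_ofReal, map_ofNat] <;> ring

lemma diagU_mul_star (θ : ℝ) (i : Fin 2) : diagU θ i * star (diagU θ i) = 1 := by
  rw [diagU_conj, diagU, ← Complex.exp_add]
  simp

lemma diagU_flip (θ : ℝ) (i : Fin 2) : diagU θ (i + 1) = star (diagU θ i) := by
  rw [diagU_conj]
  fin_cases i
  · show diagU θ 1 = _
    rw [diagU]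
    norm_num
  · show diagU θ 0 = _
    rw [diagU]
    norm_num

abbrev Qb := Fin 2 × Fin 2

noncomputable def Lmap (M : Matrix Qb Qb ℂ) :
    Matrix Qb Qb ℂ →ₗ[ℝ] Matrix Qb Qb ℂ where
  toFun ρ := Matrix.of fun a b => M a b * ρ a b
  map_add' x y := by ext a b; simp [mul_add]
  map_smul' c x := by ext a b; simp [Matrix.smul_apply, Complex.real_smul]; ring

noncomputable def e01 : Matrix Qb Qb ℂ :=
  Matrix.of fun a b => if (a = (0,0) ∧ b = (0,1)) ∨ (a = (1,0) ∧ b = (1,1)) then 1 else 0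
noncomputable def e02 : Matrix Qb Qb ℂ :=
  Matrix.of fun a b => if (a = (0,0) ∧ b = (1,0)) ∨ (a = (0,1) ∧ b = (1,1)) then 1 else 0
noncomputable def e03 : Matrix Qb Qb ℂ :=
  Matrix.of fun a b => if a = (0,0) ∧ b = (1,1) then 1 else 0
noncomputable def e12 : Matrix Qb Qb ℂ :=
  Matrix.of fun a b => if a = (0,1) ∧ b = (1,0) then 1 else 0

noncomputable def bM (p : ℝ × ℂ × ℂ × ℂ × ℂ) : Matrix Qb Qb ℂ :=
  (p.1 : ℂ) • (1 : Matrix Qb Qb ℂ)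
  + p.2.1 • e01 + star p.2.1 • e01ᵀ
  + p.2.2.1 • e02 + star p.2.2.1 • e02ᵀ
  + p.2.2.2.1 • e03 + star p.2.2.2.1 • e03ᵀ
  + p.2.2.2.2 • e12 + star p.2.2.2.2 • e12ᵀ

noncomputable def Phi : (ℝ × ℂ × ℂ × ℂ × ℂ) →ₗ[ℝ] (Matrix Qb Qb ℂ →ₗ[ℝ] Matrix Qb Qb ℂ) where
  toFun p := Lmap (bM p)
  map_add' p q := by
    have h : bM (p + q) = bM p + bM q := by
      simp only [bM, Prod.fst_add, Prod.snd_add, star_add, Complex.ofReal_add, add_smul]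
      abel
    ext ρ a b
    simp [Lmap, h, Matrix.add_apply, add_mul]
  map_smul' c p := by
    have h : bM (c • p) = (c : ℂ) • bM p := by
      simp only [bM, Prod.smul_fst, Prod.smul_snd, smul_eq_mul, Complex.ofReal_mul,
        star_mul', Complex.star_def, Complex.conj_ofReal, smul_smul, smul_add,
        Complex.real_smul]
    ext ρ a b
    simp [Lmap, h, Matrix.smul_apply, Complex.real_smul]
    ring

lemma Phi_apply (p : ℝ × ℂ × ℂ × ℂ × ℂ) (ρ : Matrix Qb Qb ℂ) (a b : Qb) :
    Phi p ρ a b = bM p a b * ρ a b := rfl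

lemma chan_apply (d : Qb → ℂ) (ρ : Matrix Qb Qb ℂ) (a b : Qb) :
    chan (Matrix.diagonal d) ρ a b = d a * ρ a b * star (d b) := by
  show ((Matrix.diagonal d) * ρ * (Matrix.diagonal d)ᴴ) a b = _
  rw [Matrix.diagonal_conjTranspose, Matrix.mul_diagonal, Matrix.diagonal_mul]
  rfl

lemma chan_diag_eq (α β : ℂ) (hα : α ≠ 0) (hβ : β ≠ 0)
    (hα1 : star α = α⁻¹) (hβ1 : star β = β⁻¹) :
    chan ((Matrix.diagonal ![1, α]) ⊗ₖ (Matrix.diagonal ![1, β]))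
      = Phi (1, star β, star α, star α * star β, β * star α) := by
  rw [Matrix.diagonal_kronecker_diagonal]
  ext ρ a b
  rw [chan_apply, Phi_apply]
  obtain ⟨a1, a2⟩ := a
  obtain ⟨b1, b2⟩ := b
  have hα2 : (starRingEnd ℂ) α = α⁻¹ := hα1
  have hβ2 : (starRingEnd ℂ) β = β⁻¹ := hβ1
  fin_cases a1 <;> fin_cases a2 <;> fin_cases b1 <;> fin_cases b2 <;>
    · simp [bM, e01, e02, e03, e12, Matrix.add_apply, Matrix.smul_apply,
        Matrix.one_apply, Matrix.transpose_apply, Matrix.of_apply,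
        Prod.ext_iff, star_mul', star_one, hα1, hβ1, hα2, hβ2]
      try field_simp
      try ring

end Stmt18Aux

/-- the matrix `M` representing `E[U⊗V]` for diagonal unitaries has unit
diagonal, is Hermitian, and is symmetric under the anti-diagonal transposition
(flipping both bits and swapping indices); consequently the real span of the 16 channels
`E[U⊗V]`, `U,V ∈ {1,Z,S,S†}`, has dimension at most 9. -/
theorem stmt18 :
    (∀ θU θV : ℝ,
      (∀ a, Mmat θU θV a a = 1) ∧
      (∀ a b, Mmat θU θV b a = starRingEnd ℂ (Mmat θU θV a b)) ∧
      (∀ a b, Mmat θU θV a b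
        = Mmat θU θV (b.1 + 1, b.2 + 1) (a.1 + 1, a.2 + 1))) ∧
    Module.finrank ℝ (Submodule.span ℝ
      (Set.image2 (fun A B => chan (A ⊗ₖ B))
        ({1, Zg, Sg, Sgᴴ} : Set (Matrix (Fin 2) (Fin 2) ℂ))
        ({1, Zg, Sg, Sgᴴ} : Set (Matrix (Fin 2) (Fin 2) ℂ)))) ≤ 9 := by
  constructor
  · intro θU θV
    refine ⟨?_, ?_, ?_⟩
    · intro a
      have h1 := diagU_mul_star θU a.1
      have h2 := diagU_mul_star θV a.2
      simp only [Mmat, star_mul']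
      calc diagU θU a.1 * diagU θV a.2 * (star (diagU θU a.1) * star (diagU θV a.2))
          = (diagU θU a.1 * star (diagU θU a.1)) * (diagU θV a.2 * star (diagU θV a.2)) := by
            ring
        _ = 1 := by rw [h1, h2, mul_one]
    · intro a b
      simp only [Mmat, starRingEnd_apply, star_mul', star_star]
      ring
    · intro a b
      simp only [Mmat, diagU_flip, star_mul', star_star]
      ring
  · have hZg : Zg = Matrix.diagonal ![1, -1] := by
      ext i j; fin_cases i <;> fin_cases j <;> simp [Zg, Matrix.diagonal]
    have hSg : Sg = Matrix.diagonal ![1, Complex.I] := by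
      ext i j; fin_cases i <;> fin_cases j <;> simp [Sg, Matrix.diagonal]
    have hSgH : Sgᴴ = Matrix.diagonal ![1, -Complex.I] := by
      ext i j; fin_cases i <;> fin_cases j <;>
        simp [Sg, Matrix.diagonal, Matrix.conjTranspose_apply, Complex.conj_I]
    have hOne : (1 : Matrix (Fin 2) (Fin 2) ℂ) = Matrix.diagonal ![1, 1] := by
      ext i j; fin_cases i <;> fin_cases j <;> simp [Matrix.diagonal, Matrix.one_apply]
    have hmem : ∀ A ∈ ({1, Zg, Sg, Sgᴴ} : Set (Matrix (Fin 2) (Fin 2) ℂ)),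
        ∃ α : ℂ, A = Matrix.diagonal ![1, α] ∧ α ≠ 0 ∧ star α = α⁻¹ := by
      rintro A (rfl | rfl | rfl | rfl)
      · exact ⟨1, hOne, one_ne_zero, by simp⟩
      · exact ⟨-1, hZg, by norm_num, by norm_num⟩
      · exact ⟨Complex.I, hSg, Complex.I_ne_zero, by
          simp [Complex.inv_I, Complex.star_def, Complex.conj_I]⟩
      · exact ⟨-Complex.I, hSgH, by simp [Complex.I_ne_zero], by
          simp [Complex.star_def, Complex.conj_I, inv_neg, Complex.inv_I]⟩
    have hsub : Set.image2 (fun A B => chan (A ⊗ₖ B))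
        ({1, Zg, Sg, Sgᴴ} : Set (Matrix (Fin 2) (Fin 2) ℂ))
        ({1, Zg, Sg, Sgᴴ} : Set (Matrix (Fin 2) (Fin 2) ℂ)) ⊆ LinearMap.range Phi := by
      rintro x ⟨A, hA, B, hB, rfl⟩
      obtain ⟨α, rfl, hα, hα1⟩ := hmem A hA
      obtain ⟨β, rfl, hβ, hβ1⟩ := hmem B hB
      exact ⟨_, (chan_diag_eq α β hα hβ hα1 hβ1).symm⟩
    have h1 : Submodule.span ℝ (Set.image2 (fun A B => chan (A ⊗ₖ B))
        ({1, Zg, Sg, Sgᴴ} : Set (Matrix (Fin 2) (Fin 2) ℂ))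
        ({1, Zg, Sg, Sgᴴ} : Set (Matrix (Fin 2) (Fin 2) ℂ))) ≤ LinearMap.range Phi :=
      Submodule.span_le.mpr hsub
    calc Module.finrank ℝ (Submodule.span ℝ (Set.image2 (fun A B => chan (A ⊗ₖ B))
          ({1, Zg, Sg, Sgᴴ} : Set (Matrix (Fin 2) (Fin 2) ℂ))
          ({1, Zg, Sg, Sgᴴ} : Set (Matrix (Fin 2) (Fin 2) ℂ))))
        ≤ Module.finrank ℝ (LinearMap.range Phi) := Submodule.finrank_mono h1
      _ ≤ Module.finrank ℝ (ℝ × ℂ × ℂ × ℂ × ℂ) := Phi.finrank_range_le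
      _ = 9 := by
          simp [Module.finrank_prod, Complex.finrank_real_complex, Module.finrank_self]
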